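/- Let n ≥ 1 be an integer and let b, c ∈ ℝ with 0 < b < c. If n is even, then all n zeros of F(−n, b; c; z) are non-real. If n is odd, then F(−n, b; c; z) has exactly one real zero, which lies in (1, ∞), and the other n − 1 zeros are non-real. -/

import Mathlib

open Polynomial
open scoped Classical

/-- The hypergeometric polynomial `F(-n, b; c; z) = ∑_{k=0}^n ((-n)_k (b)_k / ((c)_k k!)) z^k`,
viewed as a polynomial over `ℂ` (with real parameters `b`, `c`). -/
noncomputable def hypPoly (n : ℕ) (b c : ℝ) : Polynomial ℂ :=
  ∑ k ∈ Finset.range (n + 1),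
    Polynomial.C ((((((ascPochhammer ℝ k).eval (-(n : ℝ))) * ((ascPochhammer ℝ k).eval b)) /
      (((ascPochhammer ℝ k).eval c) * (Nat.factorial k : ℝ))) : ℝ) : ℂ) * Polynomial.X ^ k

/-- Number of zeros of `p`, counted with multiplicity, lying in the set `S ⊆ ℂ`. -/
noncomputable def countIn (p : Polynomial ℂ) (S : Set ℂ) : ℕ :=
  Multiset.card (p.roots.filter (fun z => z ∈ S))

/-!
For `0 < b < c` and real `x`, Euler's integral
`F(-n, b; c; x) · B(b, c - b) = ∫₀¹ t^(b-1) (1-t)^(c-b-1) (1 - x t)^n dt`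
(expand `(1 - x t)^n` and integrate term by term: the moments of the Beta weight are
`B(b + k, c - b) = (b)_k / (c)_k · B(b, c - b)`) writes the real polynomial as an average of
`(1 - x t)^n` against a positive weight. For even `n` it is therefore positive on `ℝ`. For odd
`n` it is strictly decreasing, positive for `x ≤ 1` and tends to `-∞`, so it has exactly one real
zero, which lies in `(1, ∞)`; this zero is simple since
`F'(-n, b; c; x) = -(n b / c) F(-(n-1), b+1; c+1; x)` and `n - 1` is even.
-/

open MeasureTheory Set ProbabilityTheory

noncomputable def betaWeight (u v t : ℝ) : ℝ := t ^ (u - 1) * (1 - t) ^ (v - 1)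

section BetaWeight

variable {u v t : ℝ}

lemma betaWeight_nonneg (h0 : 0 ≤ t) (h1 : t ≤ 1) : 0 ≤ betaWeight u v t :=
  mul_nonneg (Real.rpow_nonneg h0 _) (Real.rpow_nonneg (sub_nonneg.2 h1) _)

lemma betaWeight_pos (ht : t ∈ Ioo 0 1) : 0 < betaWeight u v t :=
  mul_pos (Real.rpow_pos_of_pos ht.1 _) (Real.rpow_pos_of_pos (sub_pos.2 ht.2) _)

lemma ofReal_betaWeight (h0 : 0 ≤ t) (h1 : t ≤ 1) :
    (betaWeight u v t : ℂ) = (t : ℂ) ^ ((u : ℂ) - 1) * (1 - (t : ℂ)) ^ ((v : ℂ) - 1) := by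
  rw [betaWeight, Complex.ofReal_mul, Complex.ofReal_cpow h0,
    Complex.ofReal_cpow (sub_nonneg.2 h1)]
  push_cast
  rfl

lemma betaWeight_mul_pow (hu : 0 < u) (k : ℕ) (h0 : 0 ≤ t) :
    betaWeight u v t * t ^ k = betaWeight (u + k) v t := by
  rcases h0.eq_or_lt with rfl | ht
  · rcases k.eq_zero_or_pos with rfl | hk
    · simp
    · have hk1 : (1 : ℝ) ≤ k := by exact_mod_cast hk
      rw [zero_pow hk.ne', mul_zero, betaWeight, Real.zero_rpow (by linarith), zero_mul]
  · rw [betaWeight, betaWeight, ← Real.rpow_natCast, mul_right_comm, ← Real.rpow_add ht]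
    ring_nf

lemma Complex.betaIntegral_ofReal_eq_integral (u v : ℝ) :
    Complex.betaIntegral u v = ((∫ t in (0 : ℝ)..1, betaWeight u v t : ℝ) : ℂ) := by
  rw [Complex.betaIntegral, ← intervalIntegral.integral_ofReal]
  refine intervalIntegral.integral_congr fun t ht => ?_
  rw [uIcc_of_le zero_le_one] at ht
  exact (ofReal_betaWeight ht.1 ht.2).symm

lemma intervalIntegrable_betaWeight (hu : 0 < u) (hv : 0 < v) :
    IntervalIntegrable (betaWeight u v) volume 0 1 := by
  have hc := Complex.betaIntegral_convergent (u := u) (v := v) (by simpa) (by simpa)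
  rw [intervalIntegrable_iff] at hc ⊢
  refine IntegrableOn.congr_fun (Integrable.re hc) (fun t ht => ?_) measurableSet_uIoc
  rw [uIoc_of_le zero_le_one] at ht
  simp only [← ofReal_betaWeight ht.1.le ht.2, RCLike.re_to_complex, Complex.ofReal_re]

lemma integral_betaWeight (hu : 0 < u) (hv : 0 < v) :
    ∫ t in (0 : ℝ)..1, betaWeight u v t = beta u v := by
  rw [beta_eq_betaIntegralReal u v hu hv, Complex.betaIntegral_ofReal_eq_integral,
    Complex.ofReal_re]

lemma Real.Gamma_add_nat (hu : 0 < u) (k : ℕ) :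
    Real.Gamma (u + k) = (ascPochhammer ℝ k).eval u * Real.Gamma u := by
  induction k with
  | zero => simp
  | succ k ih =>
    rw [Nat.cast_succ, ← add_assoc, Real.Gamma_add_one (by positivity), ih,
      ascPochhammer_succ_eval]
    ring

lemma beta_add_nat (hu : 0 < u) (hv : 0 < v) (k : ℕ) :
    beta (u + k) v =
      (ascPochhammer ℝ k).eval u / (ascPochhammer ℝ k).eval (u + v) * beta u v := by
  have : (ascPochhammer ℝ k).eval (u + v) ≠ 0 := (ascPochhammer_pos k _ (by positivity)).ne'
  rw [beta, beta, add_right_comm, Real.Gamma_add_nat hu, Real.Gamma_add_nat (by positivity)]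
  field_simp

lemma integral_betaWeight_mul_pow (hu : 0 < u) (hv : 0 < v) (k : ℕ) :
    ∫ t in (0 : ℝ)..1, betaWeight u v t * t ^ k =
      (ascPochhammer ℝ k).eval u / (ascPochhammer ℝ k).eval (u + v) * beta u v := by
  rw [← beta_add_nat hu hv, ← integral_betaWeight (by positivity) hv]
  refine intervalIntegral.integral_congr fun t ht => ?_
  rw [uIcc_of_le zero_le_one] at ht
  exact betaWeight_mul_pow hu k ht.1

lemma intervalIntegrable_betaWeight_mul_pow (hu : 0 < u) (hv : 0 < v) (k : ℕ) :
    IntervalIntegrable (fun t => betaWeight u v t * t ^ k) volume 0 1 := by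
  refine (intervalIntegrable_betaWeight (by positivity : 0 < u + k) hv).congr fun t ht => ?_
  rw [uIoc_of_le zero_le_one] at ht
  exact (betaWeight_mul_pow hu k ht.1.le).symm

end BetaWeight

noncomputable def eulerIntegral (u v : ℝ) (n : ℕ) (x : ℝ) : ℝ :=
  ∫ t in (0 : ℝ)..1, betaWeight u v t * (1 - x * t) ^ n

lemma betaWeight_mul_one_sub_mul_pow_eq_sum (u v : ℝ) (n : ℕ) (x t : ℝ) :
    betaWeight u v t * (1 - x * t) ^ n =
      ∑ k ∈ Finset.range (n + 1), n.choose k * (-x) ^ k * (betaWeight u v t * t ^ k) := by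
  rw [show 1 - x * t = -x * t + 1 by ring, add_pow, Finset.mul_sum]
  refine Finset.sum_congr rfl fun k _ => ?_
  rw [one_pow, mul_one, mul_pow]
  ring

section EulerIntegral

variable {u v : ℝ} (hu : 0 < u) (hv : 0 < v)
include hu hv

lemma intervalIntegrable_betaWeight_mul_one_sub_mul_pow (n : ℕ) (x : ℝ) :
    IntervalIntegrable (fun t => betaWeight u v t * (1 - x * t) ^ n) volume 0 1 := by
  simpa only [betaWeight_mul_one_sub_mul_pow_eq_sum, ← Finset.sum_fn] using
    IntervalIntegrable.sum (Finset.range (n + 1)) fun k _ =>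
      (intervalIntegrable_betaWeight_mul_pow hu hv k).const_mul ((n.choose k : ℝ) * (-x) ^ k)

lemma eulerIntegral_pos_of_even {n : ℕ} (hn : Even n) (x : ℝ) : 0 < eulerIntegral u v n x := by
  rw [eulerIntegral, intervalIntegral.integral_pos_iff_support_of_nonneg_ae' ?_
    (intervalIntegrable_betaWeight_mul_one_sub_mul_pow hu hv n x)]
  · refine ⟨zero_lt_one, ?_⟩
    have hsub : Ioo (0 : ℝ) 1 \ {x⁻¹} ⊆
        Function.support (fun t => betaWeight u v t * (1 - x * t) ^ n) ∩ Ioc 0 1 := by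
      rintro t ⟨ht, htx⟩
      refine ⟨mul_ne_zero (betaWeight_pos ht).ne' (pow_ne_zero _ fun h => htx ?_),
        Ioo_subset_Ioc_self ht⟩
      exact eq_inv_of_mul_eq_one_right (by linarith)
    refine lt_of_lt_of_le ?_ (measure_mono hsub)
    simp [measure_sdiff_null (measure_singleton _)]
  · rw [uIoc_of_le zero_le_one]
    filter_upwards [ae_restrict_mem measurableSet_Ioc] with t ht
    exact mul_nonneg (betaWeight_nonneg ht.1.le ht.2) (hn.pow_nonneg _)

lemma eulerIntegral_pos_of_le_one (n : ℕ) {x : ℝ} (hx : x ≤ 1) :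
    0 < eulerIntegral u v n x := by
  refine intervalIntegral.intervalIntegral_pos_of_pos_on
    (intervalIntegrable_betaWeight_mul_one_sub_mul_pow hu hv n x) (fun t ht => ?_) zero_lt_one
  have : x * t < 1 := by nlinarith [ht.1, ht.2]
  exact mul_pos (betaWeight_pos ht) (pow_pos (by linarith) n)

lemma strictAnti_eulerIntegral_of_odd {n : ℕ} (hn : Odd n) :
    StrictAnti (eulerIntegral u v n) := by
  intro x y hxy
  have hx := intervalIntegrable_betaWeight_mul_one_sub_mul_pow hu hv n x
  have hy := intervalIntegrable_betaWeight_mul_one_sub_mul_pow hu hv n y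
  rw [← sub_pos, eulerIntegral, eulerIntegral, ← intervalIntegral.integral_sub hx hy]
  refine intervalIntegral.intervalIntegral_pos_of_pos_on (hx.sub hy) (fun t ht => ?_) zero_lt_one
  have : (1 - y * t) ^ n < (1 - x * t) ^ n := hn.strictMono_pow (by nlinarith [ht.1])
  rw [← mul_sub]
  exact mul_pos (betaWeight_pos ht) (sub_pos.2 this)

end EulerIntegral

noncomputable def hypCoeff (n : ℕ) (b c : ℝ) (k : ℕ) : ℝ :=
  (ascPochhammer ℝ k).eval (-(n : ℝ)) * (ascPochhammer ℝ k).eval b /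
    ((ascPochhammer ℝ k).eval c * (k.factorial : ℝ))

noncomputable def hypPolyReal (n : ℕ) (b c : ℝ) : ℝ[X] :=
  ∑ k ∈ Finset.range (n + 1), C (hypCoeff n b c k) * X ^ k

lemma hypPoly_eq_map (n : ℕ) (b c : ℝ) :
    hypPoly n b c = (hypPolyReal n b c).map (algebraMap ℝ ℂ) := by
  simp only [hypPoly, hypPolyReal, Polynomial.map_sum, Polynomial.map_mul, Polynomial.map_pow,
    Polynomial.map_C, Polynomial.map_X]
  rfl

lemma hypCoeff_eq (n : ℕ) (b c : ℝ) (k : ℕ) :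
    hypCoeff n b c k =
      n.choose k * (-1) ^ k * ((ascPochhammer ℝ k).eval b / (ascPochhammer ℝ k).eval c) := by
  have hfac : (k.factorial : ℝ) ≠ 0 := by positivity
  rw [hypCoeff, ascPochhammer_eval_neg_eq_descPochhammer, descPochhammer_eval_eq_descFactorial,
    Nat.descFactorial_eq_factorial_mul_choose, mul_comm _ (k.factorial : ℝ), ← div_div]
  push_cast
  field_simp

lemma coeff_hypPolyReal (n : ℕ) (b c : ℝ) (k : ℕ) :
    (hypPolyReal n b c).coeff k = hypCoeff n b c k := by
  simp only [hypPolyReal, finsetSum_coeff, coeff_C_mul_X_pow, Finset.sum_ite_eq,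
    Finset.mem_range]
  split_ifs with hk
  · rfl
  · rw [hypCoeff_eq, Nat.choose_eq_zero_of_lt (by omega), Nat.cast_zero, zero_mul, zero_mul]

lemma eval_hypPolyReal (n : ℕ) (b c x : ℝ) :
    (hypPolyReal n b c).eval x = ∑ k ∈ Finset.range (n + 1), hypCoeff n b c k * x ^ k := by
  simp [hypPolyReal, eval_finsetSum]

lemma coeff_hypPolyReal_self (n : ℕ) (b c : ℝ) :
    (hypPolyReal n b c).coeff n =
      (-1) ^ n * ((ascPochhammer ℝ n).eval b / (ascPochhammer ℝ n).eval c) := by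
  rw [coeff_hypPolyReal, hypCoeff_eq, Nat.choose_self, Nat.cast_one, one_mul]

lemma natDegree_hypPolyReal (n : ℕ) {b c : ℝ} (hb : 0 < b) (hc : 0 < c) :
    (hypPolyReal n b c).natDegree = n := by
  refine natDegree_eq_of_le_of_coeff_ne_zero ?_ ?_
  · rw [natDegree_le_iff_coeff_eq_zero]
    intro k hk
    rw [coeff_hypPolyReal, hypCoeff_eq, Nat.choose_eq_zero_of_lt (by exact_mod_cast hk),
      Nat.cast_zero, zero_mul, zero_mul]
  · rw [coeff_hypPolyReal_self]
    exact mul_ne_zero (pow_ne_zero _ (by norm_num))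
      (div_pos (ascPochhammer_pos n b hb) (ascPochhammer_pos n c hc)).ne'

lemma ascPochhammer_succ_eval_left {S : Type*} [CommSemiring S] (n : ℕ) (x : S) :
    (ascPochhammer S (n + 1)).eval x = x * (ascPochhammer S n).eval (x + 1) := by
  simp [ascPochhammer_succ_left]

lemma derivative_hypPolyReal (n : ℕ) (b c : ℝ) :
    derivative (hypPolyReal (n + 1) b c) =
      C (-((n + 1) * b / c)) * hypPolyReal n (b + 1) (c + 1) := by
  ext k
  have hchoose : ((n + 1 : ℕ).choose (k + 1) : ℝ) * (k + 1) = (n + 1) * n.choose k := by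
    exact_mod_cast (Nat.add_one_mul_choose_eq n k).symm
  rw [coeff_derivative, coeff_C_mul, coeff_hypPolyReal, coeff_hypPolyReal, hypCoeff_eq,
    hypCoeff_eq, ascPochhammer_succ_eval_left, ascPochhammer_succ_eval_left]
  linear_combination (-1) ^ (k + 1) * (b * (ascPochhammer ℝ k).eval (b + 1) /
    (c * (ascPochhammer ℝ k).eval (c + 1))) * hchoose

lemma eval_hypPolyReal_eq_eulerIntegral_div_beta {b c : ℝ} (hb : 0 < b) (hbc : b < c)
    (n : ℕ) (x : ℝ) :
    (hypPolyReal n b c).eval x = eulerIntegral b (c - b) n x / beta b (c - b) := by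
  have hcb : 0 < c - b := sub_pos.2 hbc
  rw [eq_div_iff (beta_pos hb hcb).ne', eulerIntegral,
    intervalIntegral.integral_congr fun t _ =>
      betaWeight_mul_one_sub_mul_pow_eq_sum b (c - b) n x t,
    intervalIntegral.integral_finsetSum fun k _ =>
      (intervalIntegrable_betaWeight_mul_pow hb hcb k).const_mul _,
    eval_hypPolyReal, Finset.sum_mul]
  refine Finset.sum_congr rfl fun k _ => ?_
  rw [intervalIntegral.integral_const_mul, integral_betaWeight_mul_pow hb hcb, hypCoeff_eq,
    add_sub_cancel, neg_pow]
  ring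

section RealZeros

variable {b c : ℝ} (hb : 0 < b) (hbc : b < c)
include hb hbc

lemma eval_hypPolyReal_pos_of_even {n : ℕ} (hn : Even n) (x : ℝ) :
    0 < (hypPolyReal n b c).eval x := by
  rw [eval_hypPolyReal_eq_eulerIntegral_div_beta hb hbc]
  exact div_pos (eulerIntegral_pos_of_even hb (sub_pos.2 hbc) hn x)
    (beta_pos hb (sub_pos.2 hbc))

lemma eval_hypPolyReal_pos_of_le_one (n : ℕ) {x : ℝ} (hx : x ≤ 1) :
    0 < (hypPolyReal n b c).eval x := by
  rw [eval_hypPolyReal_eq_eulerIntegral_div_beta hb hbc]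
  exact div_pos (eulerIntegral_pos_of_le_one hb (sub_pos.2 hbc) n hx)
    (beta_pos hb (sub_pos.2 hbc))

lemma strictAnti_eval_hypPolyReal_of_odd {n : ℕ} (hn : Odd n) :
    StrictAnti fun x => (hypPolyReal n b c).eval x := by
  intro x y hxy
  simp only [eval_hypPolyReal_eq_eulerIntegral_div_beta hb hbc]
  exact div_lt_div_of_pos_right
    (strictAnti_eulerIntegral_of_odd hb (sub_pos.2 hbc) hn hxy)
    (beta_pos hb (sub_pos.2 hbc))

end RealZeros

section RealPolynomialComplexRoots

variable {p : ℝ[X]}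

lemma eval_map_ofReal (p : ℝ[X]) (x : ℝ) :
    (p.map (algebraMap ℝ ℂ)).eval (x : ℂ) = p.eval x :=
  (eval_map _ _).trans (eval₂_at_apply _ x)

lemma isRoot_re_of_mem_roots_map {z : ℂ} (hz : z ∈ (p.map (algebraMap ℝ ℂ)).roots)
    (him : z.im = 0) : p.IsRoot z.re := by
  have hzre : (z.re : ℂ) = z := Complex.ext (by simp) (by simp [him])
  have := isRoot_of_mem_roots hz
  rwa [IsRoot, ← hzre, eval_map_ofReal, Complex.ofReal_eq_zero] at this

lemma im_ne_zero_of_mem_roots_map (hp : ∀ x : ℝ, ¬ p.IsRoot x) {z : ℂ}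
    (hz : z ∈ (p.map (algebraMap ℝ ℂ)).roots) : z.im ≠ 0 :=
  fun him => hp _ (isRoot_re_of_mem_roots_map hz him)

lemma rootMultiplicity_eq_one_of_not_isRoot_derivative {r : ℝ} (hr : p.IsRoot r)
    (hr' : ¬ (derivative p).IsRoot r) : p.rootMultiplicity r = 1 := by
  have hp : p ≠ 0 := by rintro rfl; exact hr' (by simp)
  have h1 := (rootMultiplicity_pos hp).2 hr
  have h2 := (one_lt_rootMultiplicity_iff_isRoot hp).not.2 fun h => hr' h.2
  omega

lemma roots_map_filter_im_eq_zero_eq_singleton {r : ℝ} (hr : p.IsRoot r)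
    (hr' : ¬ (derivative p).IsRoot r) (huniq : ∀ x, p.IsRoot x → x = r) :
    (p.map (algebraMap ℝ ℂ)).roots.filter (fun z => z.im = 0) = {(r : ℂ)} := by
  have hreal : ∀ z ∈ (p.map (algebraMap ℝ ℂ)).roots, z.im = 0 ↔ z = r := by
    intro z hz
    refine ⟨fun him => ?_, by rintro rfl; simp⟩
    rw [← huniq _ (isRoot_re_of_mem_roots_map hz him)]
    exact Complex.ext (by simp) (by simp [him])
  have hsimple : (p.map (algebraMap ℝ ℂ)).rootMultiplicity (r : ℂ) = 1 :=
    (eq_rootMultiplicity_map (algebraMap ℝ ℂ).injective r).symm.trans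
      (rootMultiplicity_eq_one_of_not_isRoot_derivative hr hr')
  rw [Multiset.filter_congr hreal, Multiset.filter_eq', count_roots, hsimple,
    Multiset.replicate_one]

end RealPolynomialComplexRoots

lemma countIn_setOf (p : ℂ[X]) (P : ℂ → Prop) [DecidablePred P] :
    countIn p {z | P z} = Multiset.card (p.roots.filter P) := by
  unfold countIn
  -- the two filters differ only in their `Decidable` instances
  convert rfl
  exact Iff.rfl

lemma card_roots_hypPoly (n : ℕ) {b c : ℝ} (hb : 0 < b) (hc : 0 < c) :
    Multiset.card (hypPoly n b c).roots = n := by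
  rw [hypPoly_eq_map, IsAlgClosed.card_roots_map_eq_natDegree_of_injective _
    (algebraMap ℝ ℂ).injective, natDegree_hypPolyReal n hb hc]

section Zeros

variable {n : ℕ} {b c : ℝ} (hb : 0 < b) (hbc : b < c)
include hb hbc

lemma im_ne_zero_of_mem_roots_hypPoly_of_even (hn : Even n) {z : ℂ}
    (hz : z ∈ (hypPoly n b c).roots) : z.im ≠ 0 :=
  im_ne_zero_of_mem_roots_map (fun x => (eval_hypPolyReal_pos_of_even hb hbc hn x).ne')
    (hypPoly_eq_map n b c ▸ hz)

lemma eval_derivative_hypPolyReal_ne_zero_of_odd (hn : Odd n) (x : ℝ) :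
    (derivative (hypPolyReal n b c)).eval x ≠ 0 := by
  obtain ⟨m, rfl⟩ := hn
  have hc : 0 < c := hb.trans hbc
  rw [derivative_hypPolyReal, eval_mul, eval_C]
  exact mul_ne_zero (neg_ne_zero.2 (by positivity))
    (eval_hypPolyReal_pos_of_even (by linarith) (by linarith) (even_two_mul m) x).ne'

open Filter in
lemma exists_isRoot_hypPolyReal_of_odd (hn : Odd n) :
    ∃ r, 1 < r ∧ (hypPolyReal n b c).IsRoot r := by
  have hc : 0 < c := hb.trans hbc
  have hdeg := natDegree_hypPolyReal n hb hc
  have hlead : (hypPolyReal n b c).leadingCoeff < 0 := by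
    rw [leadingCoeff, hdeg, coeff_hypPolyReal_self, hn.neg_one_pow, neg_one_mul, neg_lt_zero]
    exact div_pos (ascPochhammer_pos n b hb) (ascPochhammer_pos n c hc)
  have hdeg_pos : 0 < (hypPolyReal n b c).degree := by
    rw [degree_eq_natDegree (leadingCoeff_ne_zero.1 hlead.ne), hdeg]
    exact_mod_cast hn.pos
  obtain ⟨x, hx1, hx⟩ := ((eventually_gt_atTop 1).and
    ((tendsto_atBot_of_leadingCoeff_nonpos _ hdeg_pos hlead.le).eventually
      (eventually_lt_atBot 0))).exists
  obtain ⟨r, hr, hr0⟩ := intermediate_value_Ioo' hx1.le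
    (hypPolyReal n b c).continuous.continuousOn ⟨hx, eval_hypPolyReal_pos_of_le_one hb hbc n le_rfl⟩
  exact ⟨r, hr.1, hr0⟩

lemma exists_hypPoly_roots_filter_im_eq_zero_of_odd (hn : Odd n) :
    ∃ r : ℝ, 1 < r ∧ (hypPoly n b c).roots.filter (fun z => z.im = 0) = {(r : ℂ)} := by
  obtain ⟨r, hr1, hr⟩ := exists_isRoot_hypPolyReal_of_odd hb hbc hn
  refine ⟨r, hr1, ?_⟩
  rw [hypPoly_eq_map]
  exact roots_map_filter_im_eq_zero_eq_singleton hr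
    (eval_derivative_hypPolyReal_ne_zero_of_odd hb hbc hn r)
    fun x hx => (strictAnti_eval_hypPolyReal_of_odd hb hbc hn).injective (hx.trans hr.symm)

end Zeros

theorem hypPoly_zero_lt_b_lt_c_general (n : ℕ) (b c : ℝ)
    (hb : 0 < b) (hbc : b < c) :
    (Even n →
      Multiset.card (hypPoly n b c).roots = n ∧
      ∀ z ∈ (hypPoly n b c).roots, z.im ≠ 0) ∧
    (Odd n →
      countIn (hypPoly n b c) {z | z.im = 0} = 1 ∧
      countIn (hypPoly n b c) {z | z.im = 0 ∧ 1 < z.re} = 1 ∧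
      countIn (hypPoly n b c) {z | z.im ≠ 0} = n - 1) := by
  have hcard := card_roots_hypPoly n hb (hb.trans hbc)
  refine ⟨fun hn => ⟨hcard, fun z hz => im_ne_zero_of_mem_roots_hypPoly_of_even hb hbc hn hz⟩,
    fun hn => ?_⟩
  obtain ⟨r, hr1, hreal⟩ := exists_hypPoly_roots_filter_im_eq_zero_of_odd hb hbc hn
  have hsplit := Multiset.filter_add_not (fun z : ℂ => z.im = 0) (hypPoly n b c).roots
  have hgt : ((hypPoly n b c).roots.filter (fun z => z.im = 0)).filter (fun z => 1 < z.re) =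
      {(r : ℂ)} := by
    simp [hreal, hr1]
  rw [Multiset.filter_filter] at hgt
  refine ⟨?_, ?_, ?_⟩ <;> rw [countIn_setOf]
  · rw [hreal, Multiset.card_singleton]
  · rw [Multiset.filter_congr fun _ _ => and_comm, hgt, Multiset.card_singleton]
  · simp only [ne_eq]
    have := congrArg Multiset.card hsplit
    rw [hreal, Multiset.card_add, Multiset.card_singleton, hcard] at this
    omega

/-- Zero distribution of `F(-n, b; c; z)` for `0 < b < c`. -/
theorem hypPoly_zero_lt_b_lt_c (n : ℕ) (hn : 1 ≤ n) (b c : ℝ)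
    (hb : 0 < b) (hbc : b < c) :
    (Even n →
      Multiset.card (hypPoly n b c).roots = n ∧
      ∀ z ∈ (hypPoly n b c).roots, z.im ≠ 0) ∧
    (Odd n →
      countIn (hypPoly n b c) {z | z.im = 0} = 1 ∧
      countIn (hypPoly n b c) {z | z.im = 0 ∧ 1 < z.re} = 1 ∧
      countIn (hypPoly n b c) {z | z.im ≠ 0} = n - 1) :=
  hypPoly_zero_lt_b_lt_c_general n b c hb hbc
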